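/- Assume each g_i (1 ≤ i ≤ n) is row-stochastic and column-balanced, that |A_{i+1}| ≤ 12 · |A_i| for every 0 ≤ i ≤ n-1, and that F : A_n × A_n → A_{n-1} is a function such that |{q_2 ∈ A_n : F(q_1, q_2) = q'}| ≤ 12 for every q_1 ∈ A_n and q' ∈ A_{n-1}. Let a and b be positive integers with a < n-1 and b < n, and fix l ∈ A_a and r ∈ A_b. Then ∑_{q_1 ∈ A_n} ∑_{q_2 ∈ A_n} ∑_{L,R} W(q_1, F(q_1, q_2), L, R) ≤ 12^{2n-b-a}, where the innermost sum ranges over all pairs of sequences L = (L_0, …, L_{n-1}), R = (R_0, …, R_{n-1}) with L_i ∈ A_i, R_i ∈ A_{n-1-i}, L_a = l and R_{n-b-1} = r. -/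

import Mathlib

open Finset

private def mycons {m : ℕ} {B : ℕ → Type} (x : B 0) (L' : ∀ i : Fin m, B (↑i + 1)) :
    ∀ i : Fin (m+1), B ↑i :=
  fun j => Fin.cases x L' j

private lemma sum_pi_split (m : ℕ) (B : ℕ → Type) [∀ i, Fintype (B i)]
    (φ : (∀ i : Fin (m+1), B i) → ℝ) :
    ∑ L : ∀ i : Fin (m+1), B i, φ L
      = ∑ x : B 0, ∑ L' : ∀ i : Fin m, B (↑i + 1), φ (mycons x L') := by
  rw [← (Fin.consEquiv fun i : Fin (m+1) => B ↑i).sum_comp, Fintype.sum_prod_type]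
  rfl

private lemma chainL (m : ℕ) : ∀ (B : ℕ → Type) [∀ i, Fintype (B i)] [∀ i, DecidableEq (B i)]
    (f : ∀ i : ℕ, B (i+1) → B i → ℝ),
    (∀ i, i < m → ∀ x y, 0 ≤ f i x y) →
    (∀ i, i < m → ∀ x, ∑ y, f i x y = 1) →
    (∀ i, i < m → ∀ y, ∑ x, f i x y ≤ 12) →
    ∀ k, ∀ _hk : k ≤ m, ∀ v : B k,
    ∑ L ∈ Finset.univ.filter (fun L : ∀ i : Fin (m+1), B ↑i => L ⟨k, by omega⟩ = v),
      ∏ i : Fin m, f ↑i (L ⟨↑i + 1, by have := i.isLt; omega⟩) (L ⟨↑i, by have := i.isLt; omega⟩)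
      ≤ 12 ^ (m - k) := by
  induction m with
  | zero =>
    intro B _ _ f _ _ _ k hk v
    interval_cases k
    rw [Finset.sum_filter, ← (Equiv.piUnique fun i : Fin 1 => B ↑i).symm.sum_comp]
    have hle : ∀ s : Finset (B 0), (∀ x ∈ s, x = v) → (s.card : ℝ) ≤ 1 := by
      intro s hs
      have hsub : s ⊆ {v} := fun x hx => by simp [hs x hx]
      have := Finset.card_le_card hsub
      simpa using this
    simpa using hle (Finset.univ.filter fun x : B ((default : Fin 1) : ℕ) => uniqueElim (α := fun i : Fin 1 => B ↑i) x (0 : Fin 1) = v) (fun x hx => (Finset.mem_filter.mp hx).2)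
  | succ m ih =>
    intro B _ _ f hnn hrow hcol k hk v
    rw [Finset.sum_filter, sum_pi_split]
    match k, hk with
    | 0, hk =>
      -- body rewriting
      have hbody : ∀ (x : B 0) (L' : ∀ i : Fin (m+1), B (↑i + 1)),
          (if (mycons (m := m+1) x L') ⟨0, by omega⟩ = v then
            ∏ i : Fin (m+1), f ↑i ((mycons (m := m+1) x L') ⟨↑i + 1, by have := i.isLt; omega⟩)
              ((mycons (m := m+1) x L') ⟨↑i, by have := i.isLt; omega⟩) else 0)
          = (if x = v then
              f 0 (L' ⟨0, by omega⟩) x *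
                ∏ j : Fin m, f (↑j + 1) (L' ⟨↑j + 1, by have := j.isLt; omega⟩)
                  (L' ⟨↑j, by have := j.isLt; omega⟩) else 0) := by
        intro x L'
        rw [Fin.prod_univ_succ]
        rfl
      simp only [hbody]
      have hswap : ∀ x : B 0,
          (∑ L' : ∀ i : Fin (m+1), B (↑i + 1), if x = v then
            f 0 (L' ⟨0, by omega⟩) x *
              ∏ j : Fin m, f (↑j + 1) (L' ⟨↑j + 1, by have := j.isLt; omega⟩)
                (L' ⟨↑j, by have := j.isLt; omega⟩) else 0)
          = if x = v then (∑ L' : ∀ i : Fin (m+1), B (↑i + 1),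
              f 0 (L' ⟨0, by omega⟩) x *
              ∏ j : Fin m, f (↑j + 1) (L' ⟨↑j + 1, by have := j.isLt; omega⟩)
                (L' ⟨↑j, by have := j.isLt; omega⟩)) else 0 := by
        intro x; split <;> simp
      simp only [hswap]
      rw [Finset.sum_ite_eq' Finset.univ v]
      simp only [Finset.mem_univ, if_pos]
      rw [← Finset.sum_fiberwise Finset.univ
        (fun L' : ∀ i : Fin (m+1), B (↑i + 1) => L' ⟨0, by omega⟩)]
      have hinner : ∀ y : B (0+1),
          (∑ L' ∈ Finset.univ.filter
              (fun L' : ∀ i : Fin (m+1), B (↑i + 1) => L' ⟨0, by omega⟩ = y),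
            f 0 (L' ⟨0, by omega⟩) v *
              ∏ j : Fin m, f (↑j + 1) (L' ⟨↑j + 1, by have := j.isLt; omega⟩)
                (L' ⟨↑j, by have := j.isLt; omega⟩))
          = f 0 y v * ∑ L' ∈ Finset.univ.filter
              (fun L' : ∀ i : Fin (m+1), B (↑i + 1) => L' ⟨0, by omega⟩ = y),
              ∏ j : Fin m, f (↑j + 1) (L' ⟨↑j + 1, by have := j.isLt; omega⟩)
                (L' ⟨↑j, by have := j.isLt; omega⟩) := by
        intro y
        rw [Finset.mul_sum]
        refine Finset.sum_congr rfl fun L' hL' => ?_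
        rw [(Finset.mem_filter.mp hL').2]
      rw [show ((12:ℝ) ^ (m+1-0)) = 12 * 12^m from by rw [Nat.sub_zero, pow_succ]; ring]
      simp only [hinner]
      have hIH : ∀ y : B (0+1),
          (∑ L' ∈ Finset.univ.filter
              (fun L' : ∀ i : Fin (m+1), B (↑i + 1) => L' ⟨0, by omega⟩ = y),
            ∏ j : Fin m, f (↑j + 1) (L' ⟨↑j + 1, by have := j.isLt; omega⟩)
              (L' ⟨↑j, by have := j.isLt; omega⟩)) ≤ 12^m := by
        intro y
        exact ih (fun i => B (i+1)) (fun i => f (i+1))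
          (fun i hi => hnn (i+1) (by omega))
          (fun i hi => hrow (i+1) (by omega))
          (fun i hi => hcol (i+1) (by omega)) 0 (by omega) y
      refine le_trans (Finset.sum_le_sum fun y (_ : y ∈ Finset.univ) =>
        mul_le_mul_of_nonneg_left (hIH y) (hnn 0 (by omega) y v)) ?_
      rw [← Finset.sum_mul]
      refine mul_le_mul_of_nonneg_right ?_ (by positivity)
      exact hcol 0 (by omega) v
    | (k''+1), hk =>
      have hbody : ∀ (x : B 0) (L' : ∀ i : Fin (m+1), B (↑i + 1)),
          (if (mycons (m := m+1) x L') ⟨k''+1, by omega⟩ = v then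
            ∏ i : Fin (m+1), f ↑i ((mycons (m := m+1) x L') ⟨↑i + 1, by have := i.isLt; omega⟩)
              ((mycons (m := m+1) x L') ⟨↑i, by have := i.isLt; omega⟩) else 0)
          = (if L' ⟨k'', by omega⟩ = v then
              f 0 (L' ⟨0, by omega⟩) x *
                ∏ j : Fin m, f (↑j + 1) (L' ⟨↑j + 1, by have := j.isLt; omega⟩)
                  (L' ⟨↑j, by have := j.isLt; omega⟩) else 0) := by
        intro x L'
        rw [Fin.prod_univ_succ]
        rfl
      simp only [hbody]
      rw [Finset.sum_comm]
      have hrow0 : ∀ L' : ∀ i : Fin (m+1), B (↑i + 1),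
          (∑ x : B 0, if L' ⟨k'', by omega⟩ = v then
            f 0 (L' ⟨0, by omega⟩) x *
              ∏ j : Fin m, f (↑j + 1) (L' ⟨↑j + 1, by have := j.isLt; omega⟩)
                (L' ⟨↑j, by have := j.isLt; omega⟩) else 0)
          = (if L' ⟨k'', by omega⟩ = v then
              ∏ j : Fin m, f (↑j + 1) (L' ⟨↑j + 1, by have := j.isLt; omega⟩)
                (L' ⟨↑j, by have := j.isLt; omega⟩) else 0) := by
        intro L'
        split
        · rw [← Finset.sum_mul, hrow 0 (by omega), one_mul]
        · simp
      simp only [hrow0]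
      rw [← Finset.sum_filter, Nat.succ_sub_succ]
      exact ih (fun i => B (i+1)) (fun i => f (i+1))
        (fun i hi => hnn (i+1) (by omega))
        (fun i hi => hrow (i+1) (by omega))
        (fun i hi => hcol (i+1) (by omega)) k'' (by omega) v

private lemma chainR (m : ℕ) : ∀ (B : ℕ → Type) [∀ i, Fintype (B i)] [∀ i, DecidableEq (B i)]
    (f : ∀ i : ℕ, B i → B (i+1) → ℝ),
    (∀ i, i < m → ∀ x y, 0 ≤ f i x y) →
    (∀ i, i < m → ∀ x, ∑ y, f i x y = 1) →
    (∀ i, i < m → ∀ y, ∑ x, f i x y ≤ 12) →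
    ∀ k, ∀ _hk : k ≤ m, ∀ v : B k,
    ∑ R ∈ Finset.univ.filter (fun R : ∀ i : Fin (m+1), B ↑i => R ⟨k, by omega⟩ = v),
      ∏ i : Fin m, f ↑i (R ⟨↑i, by have := i.isLt; omega⟩) (R ⟨↑i + 1, by have := i.isLt; omega⟩)
      ≤ 12 ^ k := by
  induction m with
  | zero =>
    intro B _ _ f _ _ _ k hk v
    interval_cases k
    rw [Finset.sum_filter, ← (Equiv.piUnique fun i : Fin 1 => B ↑i).symm.sum_comp]
    have hle : ∀ s : Finset (B 0), (∀ x ∈ s, x = v) → (s.card : ℝ) ≤ 1 := by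
      intro s hs
      have hsub : s ⊆ {v} := fun x hx => by simp [hs x hx]
      have := Finset.card_le_card hsub
      simpa using this
    simpa using hle (Finset.univ.filter fun x : B ((default : Fin 1) : ℕ) => uniqueElim (α := fun i : Fin 1 => B ↑i) x (0 : Fin 1) = v) (fun x hx => (Finset.mem_filter.mp hx).2)
  | succ m ih =>
    intro B _ _ f hnn hrow hcol k hk v
    rw [Finset.sum_filter, sum_pi_split]
    match k, hk with
    | 0, hk =>
      have hbody : ∀ (x : B 0) (L' : ∀ i : Fin (m+1), B (↑i + 1)),
          (if (mycons (m := m+1) x L') ⟨0, by omega⟩ = v then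
            ∏ i : Fin (m+1), f ↑i ((mycons (m := m+1) x L') ⟨↑i, by have := i.isLt; omega⟩)
              ((mycons (m := m+1) x L') ⟨↑i + 1, by have := i.isLt; omega⟩) else 0)
          = (if x = v then
              f 0 x (L' ⟨0, by omega⟩) *
                ∏ j : Fin m, f (↑j + 1) (L' ⟨↑j, by have := j.isLt; omega⟩)
                  (L' ⟨↑j + 1, by have := j.isLt; omega⟩) else 0) := by
        intro x L'
        rw [Fin.prod_univ_succ]
        rfl
      simp only [hbody]
      have hswap : ∀ x : B 0,
          (∑ L' : ∀ i : Fin (m+1), B (↑i + 1), if x = v then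
            f 0 x (L' ⟨0, by omega⟩) *
              ∏ j : Fin m, f (↑j + 1) (L' ⟨↑j, by have := j.isLt; omega⟩)
                (L' ⟨↑j + 1, by have := j.isLt; omega⟩) else 0)
          = if x = v then (∑ L' : ∀ i : Fin (m+1), B (↑i + 1),
              f 0 x (L' ⟨0, by omega⟩) *
              ∏ j : Fin m, f (↑j + 1) (L' ⟨↑j, by have := j.isLt; omega⟩)
                (L' ⟨↑j + 1, by have := j.isLt; omega⟩)) else 0 := by
        intro x; split <;> simp
      simp only [hswap]
      rw [Finset.sum_ite_eq' Finset.univ v]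
      simp only [Finset.mem_univ, if_pos]
      rw [← Finset.sum_fiberwise Finset.univ
        (fun L' : ∀ i : Fin (m+1), B (↑i + 1) => L' ⟨0, by omega⟩)]
      have hinner : ∀ y : B (0+1),
          (∑ L' ∈ Finset.univ.filter
              (fun L' : ∀ i : Fin (m+1), B (↑i + 1) => L' ⟨0, by omega⟩ = y),
            f 0 v (L' ⟨0, by omega⟩) *
              ∏ j : Fin m, f (↑j + 1) (L' ⟨↑j, by have := j.isLt; omega⟩)
                (L' ⟨↑j + 1, by have := j.isLt; omega⟩))
          = f 0 v y * ∑ L' ∈ Finset.univ.filter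
              (fun L' : ∀ i : Fin (m+1), B (↑i + 1) => L' ⟨0, by omega⟩ = y),
              ∏ j : Fin m, f (↑j + 1) (L' ⟨↑j, by have := j.isLt; omega⟩)
                (L' ⟨↑j + 1, by have := j.isLt; omega⟩) := by
        intro y
        rw [Finset.mul_sum]
        refine Finset.sum_congr rfl fun L' hL' => ?_
        rw [(Finset.mem_filter.mp hL').2]
      simp only [hinner]
      have hIH : ∀ y : B (0+1),
          (∑ L' ∈ Finset.univ.filter
              (fun L' : ∀ i : Fin (m+1), B (↑i + 1) => L' ⟨0, by omega⟩ = y),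
            ∏ j : Fin m, f (↑j + 1) (L' ⟨↑j, by have := j.isLt; omega⟩)
              (L' ⟨↑j + 1, by have := j.isLt; omega⟩)) ≤ 1 := by
        intro y
        exact ih (fun i => B (i+1)) (fun i => f (i+1))
          (fun i hi => hnn (i+1) (by omega))
          (fun i hi => hrow (i+1) (by omega))
          (fun i hi => hcol (i+1) (by omega)) 0 (by omega) y
      refine le_trans (Finset.sum_le_sum fun y (_ : y ∈ Finset.univ) =>
        mul_le_mul_of_nonneg_left (hIH y) (hnn 0 (by omega) v y)) ?_
      simp only [mul_one]
      rw [pow_zero]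
      exact le_of_eq (hrow 0 (by omega) v)
    | (k''+1), hk =>
      have hbody : ∀ (x : B 0) (L' : ∀ i : Fin (m+1), B (↑i + 1)),
          (if (mycons (m := m+1) x L') ⟨k''+1, by omega⟩ = v then
            ∏ i : Fin (m+1), f ↑i ((mycons (m := m+1) x L') ⟨↑i, by have := i.isLt; omega⟩)
              ((mycons (m := m+1) x L') ⟨↑i + 1, by have := i.isLt; omega⟩) else 0)
          = (if L' ⟨k'', by omega⟩ = v then
              f 0 x (L' ⟨0, by omega⟩) *
                ∏ j : Fin m, f (↑j + 1) (L' ⟨↑j, by have := j.isLt; omega⟩)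
                  (L' ⟨↑j + 1, by have := j.isLt; omega⟩) else 0) := by
        intro x L'
        rw [Fin.prod_univ_succ]
        rfl
      simp only [hbody]
      rw [Finset.sum_comm]
      have hcol0 : ∀ L' : ∀ i : Fin (m+1), B (↑i + 1),
          (∑ x : B 0, if L' ⟨k'', by omega⟩ = v then
            f 0 x (L' ⟨0, by omega⟩) *
              ∏ j : Fin m, f (↑j + 1) (L' ⟨↑j, by have := j.isLt; omega⟩)
                (L' ⟨↑j + 1, by have := j.isLt; omega⟩) else 0)
          = (if L' ⟨k'', by omega⟩ = v then
              (∑ x : B 0, f 0 x (L' ⟨0, by omega⟩)) *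
              ∏ j : Fin m, f (↑j + 1) (L' ⟨↑j, by have := j.isLt; omega⟩)
                (L' ⟨↑j + 1, by have := j.isLt; omega⟩) else 0) := by
        intro L'
        split
        · rw [← Finset.sum_mul]
        · simp
      simp only [hcol0]
      have hprod_nn : ∀ L' : ∀ i : Fin (m+1), B (↑i + 1),
          0 ≤ ∏ j : Fin m, f (↑j + 1) (L' ⟨↑j, by have := j.isLt; omega⟩)
              (L' ⟨↑j + 1, by have := j.isLt; omega⟩) :=
        fun L' => Finset.prod_nonneg fun j _ => hnn (↑j + 1) (by have := j.isLt; omega) _ _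
      have hstep : ∀ L' : ∀ i : Fin (m+1), B (↑i + 1),
          (if L' ⟨k'', by omega⟩ = v then
              (∑ x : B 0, f 0 x (L' ⟨0, by omega⟩)) *
              ∏ j : Fin m, f (↑j + 1) (L' ⟨↑j, by have := j.isLt; omega⟩)
                (L' ⟨↑j + 1, by have := j.isLt; omega⟩) else 0)
          ≤ (if L' ⟨k'', by omega⟩ = v then
              12 * ∏ j : Fin m, f (↑j + 1) (L' ⟨↑j, by have := j.isLt; omega⟩)
                (L' ⟨↑j + 1, by have := j.isLt; omega⟩) else 0) := by
        intro L'
        split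
        · exact mul_le_mul_of_nonneg_right (hcol 0 (by omega) _) (hprod_nn L')
        · exact le_refl 0
      refine le_trans (Finset.sum_le_sum fun L' (_ : L' ∈ Finset.univ) => hstep L') ?_
      have hfac : ∀ L' : ∀ i : Fin (m+1), B (↑i + 1),
          (if L' ⟨k'', by omega⟩ = v then
              12 * ∏ j : Fin m, f (↑j + 1) (L' ⟨↑j, by have := j.isLt; omega⟩)
                (L' ⟨↑j + 1, by have := j.isLt; omega⟩) else 0)
          = 12 * (if L' ⟨k'', by omega⟩ = v then
              ∏ j : Fin m, f (↑j + 1) (L' ⟨↑j, by have := j.isLt; omega⟩)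
                (L' ⟨↑j + 1, by have := j.isLt; omega⟩) else 0) := by
        intro L'; split <;> simp
      simp only [hfac]
      rw [← Finset.mul_sum, ← Finset.sum_filter, pow_succ, mul_comm ((12:ℝ)^k'') 12]
      refine mul_le_mul_of_nonneg_left ?_ (by norm_num)
      exact ih (fun i => B (i+1)) (fun i => f (i+1))
        (fun i hi => hnn (i+1) (by omega))
        (fun i hi => hrow (i+1) (by omega))
        (fun i hi => hcol (i+1) (by omega)) k'' (by omega) v


/-- The key estimate combined with the fiber bound on the comparison map `F`:
with `A 0, …, A n` finite nonempty sets, `g i : A i → A (i-1) → ℝ` nonnegative,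
row-stochastic and column-balanced for `1 ≤ i ≤ n`, `|A (i+1)| ≤ 12 |A i|` for
`0 ≤ i ≤ n-1`, and `F : A n × A n → A (n-1)` with all fibers
`{q₂ : F (q₁, q₂) = q'}` of size at most `12`, for positive `a < n-1`, `b < n`,
`l ∈ A a` and `r ∈ A b` we have
`∑_{q₁, q₂ ∈ A n} ∑_{L,R : L a = l, R (n-b-1) = r} W(q₁, F (q₁,q₂), L, R) ≤ 12^(2n-b-a)`,
where `W(q,q',L,R) = g n q (R 0) * 1[L (n-1) = q'] *
  ∏_{i=0}^{n-2} g (n-1-i) (R i) (R (i+1)) * g (i+1) (L (i+1)) (L i)`. -/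
theorem key_estimate_with_fiber_bound (n : ℕ) (hn : 1 ≤ n)
    (A : ℕ → Type) [∀ i, Fintype (A i)] [∀ i, Nonempty (A i)] [∀ i, DecidableEq (A i)]
    (g : ∀ i : ℕ, A i → A (i - 1) → ℝ)
    (hnonneg : ∀ i, 1 ≤ i → i ≤ n → ∀ x y, 0 ≤ g i x y)
    (hrow : ∀ i, 1 ≤ i → i ≤ n → ∀ x, ∑ y, g i x y = 1)
    (hcol : ∀ i, 1 ≤ i → i ≤ n → ∀ y, ∑ x, g i x y =
      (Fintype.card (A i) : ℝ) / (Fintype.card (A (i - 1)) : ℝ))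
    (hcard : ∀ i, i ≤ n - 1 → Fintype.card (A (i + 1)) ≤ 12 * Fintype.card (A i))
    (F : A n × A n → A (n - 1))
    (hF : ∀ q₁ : A n, ∀ q' : A (n - 1),
      (Finset.univ.filter (fun q₂ : A n => F (q₁, q₂) = q')).card ≤ 12)
    (a b : ℕ) (ha0 : 0 < a) (ha : a < n - 1) (hb0 : 0 < b) (hb : b < n)
    (l : A a) (r : A b) :
    ∑ q₁ : A n, ∑ q₂ : A n,
      ∑ L ∈ Finset.univ.filter (fun L : ∀ i : Fin n, A i => L ⟨a, by omega⟩ = l),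
        ∑ R ∈ Finset.univ.filter (fun R : ∀ i : Fin n, A (n - 1 - (i : ℕ)) =>
            R ⟨n - b - 1, by omega⟩ =
              cast (congrArg A (by omega : b = n - 1 - (n - b - 1))) r),
          (g n q₁ (R ⟨0, by omega⟩) *
            (if L ⟨n - 1, by omega⟩ = F (q₁, q₂) then (1 : ℝ) else 0) *
            ∏ i : Fin (n - 1),
              g (n - 1 - (i : ℕ)) (R ⟨(i : ℕ), by have := i.isLt; omega⟩)
                  (R ⟨(i : ℕ) + 1, by have := i.isLt; omega⟩) *
              g ((i : ℕ) + 1) (L ⟨(i : ℕ) + 1, by have := i.isLt; omega⟩)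
                  (L ⟨(i : ℕ), by have := i.isLt; omega⟩))
      ≤ (12 : ℝ) ^ (2 * n - b - a) := by
  obtain ⟨N, rfl⟩ : ∃ N, n = N + 1 := ⟨n - 1, by omega⟩
  -- ratio bound
  have ratio : ∀ j, 1 ≤ j → j ≤ N + 1 → ∀ y : A (j - 1), ∑ x : A j, g j x y ≤ 12 := by
    intro j h1 h2 y
    rw [hcol j h1 h2]
    have hc := hcard (j - 1) (by omega)
    have e : j - 1 + 1 = j := by omega
    rw [e] at hc
    have pos : (0 : ℝ) < Fintype.card (A (j - 1)) := by exact_mod_cast Fintype.card_pos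
    rw [div_le_iff₀ pos]
    exact_mod_cast hc
  -- split the summand
  have hsplit : ∀ (q₁ q₂ : A (N + 1)) (L : ∀ i : Fin (N + 1), A ↑i)
      (R : ∀ i : Fin (N + 1), A (N + 1 - 1 - (i : ℕ))),
      (g (N + 1) q₁ (R ⟨0, by omega⟩) *
        (if L ⟨N + 1 - 1, by omega⟩ = F (q₁, q₂) then (1 : ℝ) else 0) *
        ∏ i : Fin (N + 1 - 1),
          g (N + 1 - 1 - (i : ℕ)) (R ⟨(i : ℕ), by have := i.isLt; omega⟩)
              (R ⟨(i : ℕ) + 1, by have := i.isLt; omega⟩) *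
          g ((i : ℕ) + 1) (L ⟨(i : ℕ) + 1, by have := i.isLt; omega⟩)
              (L ⟨(i : ℕ), by have := i.isLt; omega⟩))
      = ((if L ⟨N + 1 - 1, by omega⟩ = F (q₁, q₂) then (1 : ℝ) else 0) *
          ∏ i : Fin (N + 1 - 1),
            g ((i : ℕ) + 1) (L ⟨(i : ℕ) + 1, by have := i.isLt; omega⟩)
              (L ⟨(i : ℕ), by have := i.isLt; omega⟩)) *
        (g (N + 1) q₁ (R ⟨0, by omega⟩) *
          ∏ i : Fin (N + 1 - 1),
            g (N + 1 - 1 - (i : ℕ)) (R ⟨(i : ℕ), by have := i.isLt; omega⟩)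
              (R ⟨(i : ℕ) + 1, by have := i.isLt; omega⟩)) := by
    intro q₁ q₂ L R
    rw [Finset.prod_mul_distrib]
    ring
  simp only [hsplit]
  simp only [← Finset.sum_mul_sum]
  simp only [← Finset.sum_mul]
  -- nonnegativity of the R-sums
  have hPr_nn : ∀ R : ∀ i : Fin (N + 1), A (N + 1 - 1 - (i : ℕ)),
      0 ≤ ∏ i : Fin (N + 1 - 1),
        g (N + 1 - 1 - (i : ℕ)) (R ⟨(i : ℕ), by have := i.isLt; omega⟩)
          (R ⟨(i : ℕ) + 1, by have := i.isLt; omega⟩) :=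
    fun R => Finset.prod_nonneg fun i _ =>
      hnonneg (N + 1 - 1 - (i : ℕ)) (by have := i.isLt; omega) (by omega) _ _
  have hPl_nn : ∀ L : ∀ i : Fin (N + 1), A ↑i,
      0 ≤ ∏ i : Fin (N + 1 - 1),
        g ((i : ℕ) + 1) (L ⟨(i : ℕ) + 1, by have := i.isLt; omega⟩)
          (L ⟨(i : ℕ), by have := i.isLt; omega⟩) :=
    fun L => Finset.prod_nonneg fun i _ =>
      hnonneg ((i : ℕ) + 1) (by omega) (by have := i.isLt; omega) _ _
  have hSR_nn : ∀ q₁ : A (N + 1),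
      0 ≤ ∑ R ∈ Finset.univ.filter (fun R : ∀ i : Fin (N + 1), A (N + 1 - 1 - (i : ℕ)) =>
            R ⟨N + 1 - b - 1, by omega⟩ =
              cast (congrArg A (by omega : b = N + 1 - 1 - (N + 1 - b - 1))) r),
          g (N + 1) q₁ (R ⟨0, by omega⟩) *
            ∏ i : Fin (N + 1 - 1),
              g (N + 1 - 1 - (i : ℕ)) (R ⟨(i : ℕ), by have := i.isLt; omega⟩)
                (R ⟨(i : ℕ) + 1, by have := i.isLt; omega⟩) :=
    fun q₁ => Finset.sum_nonneg fun R _ =>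
      mul_nonneg (hnonneg (N + 1) (by omega) (by omega) _ _) (hPr_nn R)
  -- L-chain bound
  have hLsum : (∑ L ∈ Finset.univ.filter
        (fun L : ∀ i : Fin (N + 1), A ↑i => L ⟨a, by omega⟩ = l),
      ∏ i : Fin (N + 1 - 1),
        g ((i : ℕ) + 1) (L ⟨(i : ℕ) + 1, by have := i.isLt; omega⟩)
          (L ⟨(i : ℕ), by have := i.isLt; omega⟩)) ≤ 12 ^ (N - a) := by
    exact chainL N A (fun i => g (i + 1))
      (fun i hi x y => hnonneg (i + 1) (by omega) (by omega) x y)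
      (fun i hi x => hrow (i + 1) (by omega) (by omega) x)
      (fun i hi y => ratio (i + 1) (by omega) (by omega) y)
      a (by omega) l
  -- R-chain bound
  have hRsum : (∑ R ∈ Finset.univ.filter
        (fun R : ∀ i : Fin (N + 1), A (N + 1 - 1 - (i : ℕ)) =>
          R ⟨N + 1 - b - 1, by omega⟩ =
            cast (congrArg A (by omega : b = N + 1 - 1 - (N + 1 - b - 1))) r),
      ∏ i : Fin (N + 1 - 1),
        g (N + 1 - 1 - (i : ℕ)) (R ⟨(i : ℕ), by have := i.isLt; omega⟩)
          (R ⟨(i : ℕ) + 1, by have := i.isLt; omega⟩)) ≤ 12 ^ (N + 1 - b - 1) := by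
    exact chainR N (fun j => A (N + 1 - 1 - j)) (fun j => g (N + 1 - 1 - j))
      (fun i hi x y => hnonneg (N + 1 - 1 - i) (by omega) (by omega) x y)
      (fun i hi x => hrow (N + 1 - 1 - i) (by omega) (by omega) x)
      (fun i hi y => ratio (N + 1 - 1 - i) (by omega) (by omega) y)
      (N + 1 - b - 1) (by omega)
      (cast (congrArg A (by omega : b = N + 1 - 1 - (N + 1 - b - 1))) r)
  -- fiber bound for the indicator sum
  have hq2 : ∀ (q₁ : A (N + 1)) (L : ∀ i : Fin (N + 1), A ↑i),
      (∑ q₂ : A (N + 1), if L ⟨N + 1 - 1, by omega⟩ = F (q₁, q₂) then (1 : ℝ) else 0) ≤ 12 := by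
    intro q₁ L
    rw [Finset.sum_boole]
    have he : (Finset.univ.filter fun q₂ : A (N + 1) => L ⟨N + 1 - 1, by omega⟩ = F (q₁, q₂))
        = (Finset.univ.filter fun q₂ : A (N + 1) => F (q₁, q₂) = L ⟨N + 1 - 1, by omega⟩) := by
      simp only [eq_comm]
    rw [he]
    exact_mod_cast hF q₁ _
  -- bound on the L part summed over q₂
  have hSL : ∀ q₁ : A (N + 1),
      (∑ q₂ : A (N + 1),
        ∑ L ∈ Finset.univ.filter (fun L : ∀ i : Fin (N + 1), A ↑i => L ⟨a, by omega⟩ = l),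
          (if L ⟨N + 1 - 1, by omega⟩ = F (q₁, q₂) then (1 : ℝ) else 0) *
            ∏ i : Fin (N + 1 - 1),
              g ((i : ℕ) + 1) (L ⟨(i : ℕ) + 1, by have := i.isLt; omega⟩)
                (L ⟨(i : ℕ), by have := i.isLt; omega⟩))
      ≤ 12 * 12 ^ (N - a) := by
    intro q₁
    rw [Finset.sum_comm]
    simp only [← Finset.sum_mul]
    refine le_trans (Finset.sum_le_sum fun L (_ : L ∈ _) =>
      mul_le_mul_of_nonneg_right (hq2 q₁ L) (hPl_nn L)) ?_
    rw [← Finset.mul_sum]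
    exact mul_le_mul_of_nonneg_left hLsum (by norm_num)
  -- bound on the R part summed over q₁
  have hq1 : (∑ q₁ : A (N + 1),
      ∑ R ∈ Finset.univ.filter (fun R : ∀ i : Fin (N + 1), A (N + 1 - 1 - (i : ℕ)) =>
            R ⟨N + 1 - b - 1, by omega⟩ =
              cast (congrArg A (by omega : b = N + 1 - 1 - (N + 1 - b - 1))) r),
          g (N + 1) q₁ (R ⟨0, by omega⟩) *
            ∏ i : Fin (N + 1 - 1),
              g (N + 1 - 1 - (i : ℕ)) (R ⟨(i : ℕ), by have := i.isLt; omega⟩)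
                (R ⟨(i : ℕ) + 1, by have := i.isLt; omega⟩))
      ≤ 12 * 12 ^ (N + 1 - b - 1) := by
    rw [Finset.sum_comm]
    simp only [← Finset.sum_mul]
    refine le_trans (Finset.sum_le_sum fun R (_ : R ∈ _) =>
      mul_le_mul_of_nonneg_right (ratio (N + 1) (by omega) (by omega) _) (hPr_nn R)) ?_
    rw [← Finset.mul_sum]
    exact mul_le_mul_of_nonneg_left hRsum (by norm_num)
  refine le_trans (Finset.sum_le_sum fun q₁ (_ : q₁ ∈ _) =>
    mul_le_mul_of_nonneg_right (hSL q₁) (hSR_nn q₁)) ?_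
  rw [← Finset.mul_sum]
  refine le_trans (mul_le_mul_of_nonneg_left hq1 (by positivity)) ?_
  apply le_of_eq
  rw [← pow_succ', ← pow_succ', ← pow_add]
  congr 1
  omega
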